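/- Carving width is monotone under immersion for Eulerian digraphs: if G and H are Eulerian digraphs and G immerses H, then the carving width of H is at most the carving width of G. In particular, carving width does not increase when taking Eulerian subgraphs, nor when splitting off an edge pair at a vertex. -/

import Mathlib

structure MDigraph where
  V : Type
  E : Type
  [fintV : Fintype V]
  [fintE : Fintype E]
  [decV : DecidableEq V]
  [decE : DecidableEq E]
  tail : E → V
  head : E → V

attribute [instance] MDigraph.fintV MDigraph.fintE MDigraph.decV MDigraph.decE

/-- An Eulerian digraph: every vertex has equal in-degree and out-degree. -/
def MDigraph.Eulerian (G : MDigraph) : Prop :=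
  ∀ v : G.V, Nat.card {e : G.E // G.head e = v} = Nat.card {e : G.E // G.tail e = v}

/-- A directed trail: a nonempty walk without repeated edges. -/
structure MDigraph.Trail (G : MDigraph) : Type where
  edges : List G.E
  nonempty : edges ≠ []
  chain : edges.Chain' (fun e f => G.head e = G.tail f)
  nodup : edges.Nodup

def MDigraph.Trail.first {G : MDigraph} (t : G.Trail) : G.V :=
  G.tail (t.edges.head t.nonempty)

def MDigraph.Trail.last {G : MDigraph} (t : G.Trail) : G.V :=
  G.head (t.edges.getLast t.nonempty)

/-- The internal vertices of a trail, in order. -/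
def MDigraph.Trail.internals {G : MDigraph} (t : G.Trail) : List G.V :=
  t.edges.dropLast.map G.head

/-- An immersion of `H` into `G`: vertices map injectively to vertices, edges map to
pairwise edge-disjoint directed trails respecting heads and tails. -/
structure MDigraph.Immersion (H G : MDigraph) : Type where
  vmap : H.V → G.V
  vinj : Function.Injective vmap
  emap : H.E → G.Trail
  first_eq : ∀ e : H.E, (emap e).first = vmap (H.tail e)
  last_eq : ∀ e : H.E, (emap e).last = vmap (H.head e)
  edisj : ∀ e f : H.E, e ≠ f → (emap e).edges.Disjoint (emap f).edges

/-- A carving of `G`: a cubic tree together with an injective labelling of the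
vertices of `G` by leaves of the tree. -/
structure Carving (G : MDigraph) : Type 1 where
  VT : Type
  [fintVT : Fintype VT]
  [decVT : DecidableEq VT]
  T : SimpleGraph VT
  [decAdj : DecidableRel T.Adj]
  isTree : T.IsTree
  cubic : ∀ x : VT, T.degree x = 1 ∨ T.degree x = 3
  label : G.V → VT
  label_leaf : ∀ v : G.V, T.degree (label v) = 1
  label_inj : Function.Injective label

/-- An edge `a` of `G` crosses the bipartition induced by the tree edge `{u, v}`. -/
def Carving.sep {G : MDigraph} (c : Carving G) (u v : c.VT) (a : G.E) : Prop :=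
  ((c.T.deleteEdges {s(u, v)}).Reachable (c.label (G.tail a)) u ∧
      (c.T.deleteEdges {s(u, v)}).Reachable (c.label (G.head a)) v) ∨
    ((c.T.deleteEdges {s(u, v)}).Reachable (c.label (G.tail a)) v ∧
      (c.T.deleteEdges {s(u, v)}).Reachable (c.label (G.head a)) u)

/-- The width of the tree edge `{u, v}` in the carving `c`. -/
noncomputable def Carving.cross {G : MDigraph} (c : Carving G) (u v : c.VT) : ℕ :=
  Nat.card {a : G.E // c.sep u v a}

/-- The width of a carving: the maximum width of an edge of the tree. -/
noncomputable def Carving.width {G : MDigraph} (c : Carving G) : ℕ :=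
  sSup {n : ℕ | ∃ u v : c.VT, c.T.Adj u v ∧ n = c.cross u v}

/-- The carving width of `G`: the minimum width of a carving of `G`. -/
noncomputable def carvingWidth (G : MDigraph) : ℕ :=
  sInf {n : ℕ | ∃ c : Carving G, c.width = n}

/-- `H` is (isomorphic to) a subgraph of `G`. -/
def IsSubgraph (H G : MDigraph) : Prop :=
  ∃ (fv : H.V → G.V) (fe : H.E → G.E),
    Function.Injective fv ∧ Function.Injective fe ∧
      (∀ e : H.E, G.tail (fe e) = fv (H.tail e)) ∧
      (∀ e : H.E, G.head (fe e) = fv (H.head e))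

/-- The concrete digraph obtained from `G` by splitting off the edge pair `(e, e')`:
`e` and `e'` are removed and replaced by a single new edge from `tail e` to `head e'`. -/
def splitGraph (G : MDigraph) (e e' : G.E) : MDigraph where
  V := G.V
  E := {x : G.E // x ≠ e ∧ x ≠ e'} ⊕ Unit
  tail := Sum.elim (fun x => G.tail x.val) (fun _ => G.tail e)
  head := Sum.elim (fun x => G.head x.val) (fun _ => G.head e')

/-!
A carving of `G` pulls back along an immersion `H → G` to a carving of `H` on the same tree:
label each vertex of `H` by the leaf of its image. If an edge of `H` crosses a tree edge,
its trail in `G` starts on one side and ends on the other, so one of the trail's edges crosses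
as well; the trails are edge-disjoint, so this assigns distinct crossing edges of `G` to the
crossing edges of `H`. Hence no tree edge gets wider. The infimum defining the carving width of
`G` is attained because every digraph has a carving: cubic trees with arbitrarily many leaves
are obtained from `K₂` by repeatedly attaching two new leaves to a leaf.
-/

open Finset

lemma List.exists_mem_crossing_of_isChain {α β : Type*} (tl hd : α → β) (P Q : β → Prop)
    (hPQ : ∀ b, P b ∨ Q b) :
    ∀ (l : List α) (hl : l ≠ []), l.IsChain (fun e f => hd e = tl f) →
      P (tl (l.head hl)) → Q (hd (l.getLast hl)) → ∃ g ∈ l, P (tl g) ∧ Q (hd g)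
  | [], hl, _, _, _ => absurd rfl hl
  | [g], _, _, hP, hQ => ⟨g, List.mem_singleton_self g, hP, hQ⟩
  | g :: g' :: l, _, hchain, hP, hQ => by
    rw [List.isChain_cons_cons] at hchain
    rcases hPQ (hd g) with hg | hg
    · obtain ⟨x, hx, hxP, hxQ⟩ :=
        exists_mem_crossing_of_isChain tl hd P Q hPQ (g' :: l) (List.cons_ne_nil _ _) hchain.2
          (hchain.1 ▸ hg) hQ
      exact ⟨x, List.mem_cons_of_mem g hx, hxP, hxQ⟩
    · exact ⟨g, List.mem_cons_self, hP, hg⟩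

namespace SimpleGraph

variable {V W : Type*} {G : SimpleGraph V} {H : SimpleGraph W}

lemma natCard_edgeSet_sup_edge [Finite V] {a b : V} (hab : a ≠ b) (hn : ¬G.Adj a b) :
    Nat.card (G ⊔ edge a b).edgeSet = Nat.card G.edgeSet + 1 := by
  classical
  have := Fintype.ofFinite V
  simp only [Nat.card_eq_fintype_card, ← edgeFinset_card]
  exact card_edgeFinset_sup_edge _ hn hab

lemma Preconnected.reachable_deleteEdges_or (hG : G.Preconnected) (u v x : V) :
    (G.deleteEdges {s(u, v)}).Reachable x u ∨ (G.deleteEdges {s(u, v)}).Reachable x v := by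
  set D := G.deleteEdges {s(u, v)}
  set S := {y | D.Reachable y u ∨ D.Reachable y v}
  by_contra hx
  obtain ⟨⟨⟨a, b⟩, hab⟩, -, ha, hb⟩ :=
    (hG u x).some.exists_boundary_dart S (Or.inl .rfl) hx
  by_cases he : s(a, b) = s(u, v)
  · rcases Sym2.eq_iff.mp he with ⟨-, rfl⟩ | ⟨-, rfl⟩
    · exact hb (Or.inr .rfl)
    · exact hb (Or.inl .rfl)
  · have hab' : D.Adj b a :=
      (deleteEdges_adj ..).mpr ⟨hab.symm, by rwa [Set.mem_singleton_iff, Sym2.eq_swap]⟩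
    exact hb (ha.imp hab'.reachable.trans hab'.reachable.trans)

lemma IsTree.sum_sup_edge [Finite V] [Finite W] (hG : G.IsTree) (hH : H.IsTree) (v : V) (w : W) :
    (G.sum H ⊔ edge (.inl v) (.inr w)).IsTree := by
  rw [isTree_iff_connected_and_card] at hG hH ⊢
  refine ⟨hG.1.sum_sup_edge hH.1, ?_⟩
  rw [natCard_edgeSet_sup_edge Sum.inl_ne_inr (by simp), Nat.card_congr edgeSetSumEquiv,
    Nat.card_sum, Nat.card_sum]
  omega

instance [DecidableRel G.Adj] [DecidableRel H.Adj] : DecidableRel (G.sum H).Adj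
  | .inl _, .inl _ => decidable_of_iff _ sum_adj_inl.symm
  | .inr _, .inr _ => decidable_of_iff _ sum_adj_inr.symm
  | .inl _, .inr _ => isFalse (not_adj_sum_inl_inr _ _)
  | .inr _, .inl _ => isFalse fun h => not_adj_sum_inl_inr _ _ h.symm

def addLeaf (G : SimpleGraph V) (v : V) : SimpleGraph (V ⊕ Unit) :=
  G.sum ⊥ ⊔ edge (.inl v) (.inr ())

instance [DecidableEq V] [DecidableRel G.Adj] (v : V) : DecidableRel (G.addLeaf v).Adj :=
  inferInstanceAs (DecidableRel (G.sum ⊥ ⊔ edge _ _).Adj)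

lemma IsTree.addLeaf [Finite V] (hG : G.IsTree) (v : V) : (G.addLeaf v).IsTree :=
  hG.sum_sup_edge .of_subsingleton v ()

lemma neighborSet_addLeaf_inl_self (v : V) :
    (G.addLeaf v).neighborSet (.inl v) = insert (.inr ()) (Sum.inl '' G.neighborSet v) := by
  ext (y | y) <;> simp [addLeaf, edge_adj]

lemma neighborSet_addLeaf_inl_of_ne {v x : V} (hx : x ≠ v) :
    (G.addLeaf v).neighborSet (.inl x) = Sum.inl '' G.neighborSet x := by
  ext (y | y) <;> simp [addLeaf, edge_adj, hx]

lemma neighborSet_addLeaf_inr (v : V) :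
    (G.addLeaf v).neighborSet (.inr ()) = {.inl v} := by
  ext (y | y) <;> simp [addLeaf, edge_adj, eq_comm]

variable (v : V)

lemma degree_addLeaf_inl_self [Fintype (G.neighborSet v)]
    [Fintype ((G.addLeaf v).neighborSet (.inl v))] :
    (G.addLeaf v).degree (.inl v) = G.degree v + 1 := by
  rw [← card_neighborSet_eq_degree, ← card_neighborSet_eq_degree, ← Nat.card_eq_fintype_card,
    ← Nat.card_eq_fintype_card, neighborSet_addLeaf_inl_self, Nat.card_coe_set_eq,
    Set.ncard_insert_of_notMem (by simp), Set.ncard_image_of_injective _ Sum.inl_injective,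
    Nat.card_coe_set_eq]

lemma degree_addLeaf_inl_of_ne {x : V} (hx : x ≠ v) [Fintype (G.neighborSet x)]
    [Fintype ((G.addLeaf v).neighborSet (.inl x))] :
    (G.addLeaf v).degree (.inl x) = G.degree x := by
  rw [← card_neighborSet_eq_degree, ← card_neighborSet_eq_degree, ← Nat.card_eq_fintype_card,
    ← Nat.card_eq_fintype_card, neighborSet_addLeaf_inl_of_ne hx, Nat.card_coe_set_eq,
    Set.ncard_image_of_injective _ Sum.inl_injective, Nat.card_coe_set_eq]

lemma degree_addLeaf_inr [Fintype ((G.addLeaf v).neighborSet (.inr ()))] :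
    (G.addLeaf v).degree (.inr ()) = 1 := by
  rw [← card_neighborSet_eq_degree, ← Nat.card_eq_fintype_card, neighborSet_addLeaf_inr,
    Nat.card_unique]

end SimpleGraph

open SimpleGraph

structure CubicTree : Type 1 where
  VT : Type
  [fintVT : Fintype VT]
  [decVT : DecidableEq VT]
  T : SimpleGraph VT
  [decAdj : DecidableRel T.Adj]
  isTree : T.IsTree
  cubic : ∀ x : VT, T.degree x = 1 ∨ T.degree x = 3

attribute [instance] CubicTree.fintVT CubicTree.decVT CubicTree.decAdj

namespace CubicTree

def singleEdge : CubicTree where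
  VT := Unit ⊕ Unit
  T := (⊥ : SimpleGraph Unit).addLeaf ()
  isTree := IsTree.of_subsingleton.addLeaf ()
  cubic := by
    rintro (⟨⟩ | ⟨⟩)
    · left; rw [degree_addLeaf_inl_self, bot_degree]
    · left; exact degree_addLeaf_inr ()

def graft (t : CubicTree) (ℓ : t.VT) (hℓ : t.T.degree ℓ = 1) : CubicTree where
  VT := (t.VT ⊕ Unit) ⊕ Unit
  T := (t.T.addLeaf ℓ).addLeaf (.inl ℓ)
  isTree := (t.isTree.addLeaf ℓ).addLeaf _
  cubic := by
    rintro ((x | ⟨⟩) | ⟨⟩)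
    · by_cases hx : x = ℓ
      · subst hx
        right; rw [degree_addLeaf_inl_self, degree_addLeaf_inl_self, hℓ]
      · have hx' : (Sum.inl x : t.VT ⊕ Unit) ≠ .inl ℓ := by simpa
        rw [degree_addLeaf_inl_of_ne _ hx', degree_addLeaf_inl_of_ne _ hx]
        exact t.cubic x
    · left; rw [degree_addLeaf_inl_of_ne _ (by simp), degree_addLeaf_inr]
    · left; exact degree_addLeaf_inr _

-- Handshake lemma: `L + 3 (|V| - L) = 2 (|V| - 1)` for a cubic tree with `L` leaves.
lemma two_mul_card_leaves (t : CubicTree) :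
    2 * #{x | t.T.degree x = 1} = Fintype.card t.VT + 2 := by
  have hsum := t.T.sum_degrees_eq_twice_card_edges
  have hedges := t.isTree.card_edgeFinset
  have hcubic : ∑ x, t.T.degree x = ∑ x, if t.T.degree x = 1 then 1 else 3 :=
    Finset.sum_congr rfl fun x _ => by rcases t.cubic x with h | h <;> simp [h]
  rw [hcubic, Finset.sum_ite, Finset.sum_const, Finset.sum_const, smul_eq_mul, smul_eq_mul] at hsum
  have := Finset.card_filter_add_card_filter_not (s := Finset.univ) (fun x => t.T.degree x = 1)
  rw [Finset.card_univ] at this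
  omega

lemma exists_le_card (n : ℕ) : ∃ t : CubicTree, n ≤ Fintype.card t.VT := by
  induction n with
  | zero => exact ⟨singleEdge, Nat.zero_le _⟩
  | succ n ih =>
    obtain ⟨t, ht⟩ := ih
    obtain ⟨ℓ, hℓ⟩ : ∃ ℓ, t.T.degree ℓ = 1 := by
      have := t.two_mul_card_leaves
      obtain ⟨ℓ, hℓ⟩ := Finset.card_pos.mp (by omega : 0 < #{x | t.T.degree x = 1})
      exact ⟨ℓ, (Finset.mem_filter.mp hℓ).2⟩
    refine ⟨t.graft ℓ hℓ, ?_⟩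
    change n + 1 ≤ Fintype.card ((t.VT ⊕ Unit) ⊕ Unit)
    simp only [Fintype.card_sum, Fintype.card_unit]
    omega

end CubicTree

theorem nonempty_carving (G : MDigraph) : Nonempty (Carving G) := by
  obtain ⟨t, ht⟩ := CubicTree.exists_le_card (2 * Fintype.card G.V)
  have hleaves : Fintype.card G.V ≤ Fintype.card {x // t.T.degree x = 1} := by
    have := t.two_mul_card_leaves
    rw [Fintype.card_subtype]
    omega
  obtain ⟨f⟩ := Function.Embedding.nonempty_of_card_le hleaves
  exact ⟨{ VT := t.VT, T := t.T, isTree := t.isTree, cubic := t.cubic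
           label := fun v => f v
           label_leaf := fun v => (f v).2
           label_inj := Subtype.val_injective.comp f.injective }⟩

namespace Carving

variable {G H : MDigraph}

def comap (c : Carving G) (I : H.Immersion G) : Carving H where
  VT := c.VT
  fintVT := c.fintVT
  decVT := c.decVT
  T := c.T
  decAdj := c.decAdj
  isTree := c.isTree
  cubic := c.cubic
  label := c.label ∘ I.vmap
  label_leaf _ := c.label_leaf _
  label_inj := c.label_inj.comp I.vinj

lemma exists_sep_mem_of_sep_comap (c : Carving G) (I : H.Immersion G) {u v : c.VT} {a : H.E}
    (ha : (c.comap I).sep u v a) : ∃ g ∈ (I.emap a).edges, c.sep u v g := by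
  set D := c.T.deleteEdges {s(u, v)}
  have hside := c.isTree.connected.preconnected.reachable_deleteEdges_or u v
  have crossing := fun (P Q : c.VT → Prop) (hPQ : ∀ x, P x ∨ Q x) =>
    List.exists_mem_crossing_of_isChain G.tail G.head (P ∘ c.label) (Q ∘ c.label)
      (fun _ => hPQ _) (I.emap a).edges (I.emap a).nonempty (I.emap a).chain
  have hfirst : G.tail ((I.emap a).edges.head (I.emap a).nonempty) = I.vmap (H.tail a) :=
    I.first_eq a
  have hlast : G.head ((I.emap a).edges.getLast (I.emap a).nonempty) = I.vmap (H.head a) :=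
    I.last_eq a
  rcases ha with ⟨htail, hhead⟩ | ⟨htail, hhead⟩
  · obtain ⟨g, hg, hgt, hgh⟩ := crossing (D.Reachable · u) (D.Reachable · v) hside
      (by rw [Function.comp_apply, hfirst]; exact htail)
      (by rw [Function.comp_apply, hlast]; exact hhead)
    exact ⟨g, hg, .inl ⟨hgt, hgh⟩⟩
  · obtain ⟨g, hg, hgt, hgh⟩ := crossing (D.Reachable · v) (D.Reachable · u)
      (fun x => (hside x).symm) (by rw [Function.comp_apply, hfirst]; exact htail)
      (by rw [Function.comp_apply, hlast]; exact hhead)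
    exact ⟨g, hg, .inr ⟨hgt, hgh⟩⟩

lemma cross_comap_le (c : Carving G) (I : H.Immersion G) (u v : c.VT) :
    (c.comap I).cross u v ≤ c.cross u v := by
  choose g hg hsep using fun a : {a // (c.comap I).sep u v a} =>
    c.exists_sep_mem_of_sep_comap I a.2
  refine Nat.card_le_card_of_injective (fun a => ⟨g a, hsep a⟩) fun a b hab => ?_
  by_contra hne
  have hgab : g a = g b := congrArg Subtype.val hab
  exact I.edisj a b (fun h => hne (Subtype.ext h)) (hg a) (hgab ▸ hg b)

lemma cross_le_card (c : Carving G) (u v : c.VT) : c.cross u v ≤ Fintype.card G.E :=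
  Nat.card_eq_fintype_card (α := G.E) ▸
    Nat.card_le_card_of_injective Subtype.val Subtype.val_injective

lemma cross_le_width (c : Carving G) {u v : c.VT} (huv : c.T.Adj u v) :
    c.cross u v ≤ c.width :=
  le_csSup ⟨Fintype.card G.E, by rintro _ ⟨u, v, -, rfl⟩; exact c.cross_le_card u v⟩
    ⟨u, v, huv, rfl⟩

lemma width_comap_le (c : Carving G) (I : H.Immersion G) : (c.comap I).width ≤ c.width :=
  csSup_le' fun _ ⟨u, v, huv, hn⟩ =>
    hn ▸ (c.cross_comap_le I u v).trans (c.cross_le_width huv)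

end Carving

lemma carvingWidth_le_of_immersion {H G : MDigraph} (I : H.Immersion G) :
    carvingWidth H ≤ carvingWidth G := by
  obtain ⟨c₀⟩ := nonempty_carving G
  obtain ⟨c, hc⟩ := Nat.sInf_mem (s := {n | ∃ c : Carving G, c.width = n}) ⟨_, c₀, rfl⟩
  calc carvingWidth H ≤ (c.comap I).width := Nat.sInf_le ⟨c.comap I, rfl⟩
    _ ≤ c.width := c.width_comap_le I
    _ = carvingWidth G := hc

def MDigraph.Trail.single {G : MDigraph} (e : G.E) : G.Trail :=
  ⟨[e], List.cons_ne_nil _ _, List.isChain_singleton _, List.nodup_singleton _⟩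

lemma IsSubgraph.nonempty_immersion {H G : MDigraph} (h : IsSubgraph H G) :
    Nonempty (H.Immersion G) := by
  obtain ⟨fv, fe, hfv, hfe, htail, hhead⟩ := h
  exact ⟨{ vmap := fv
           vinj := hfv
           emap := fun e => .single (fe e)
           first_eq := htail
           last_eq := hhead
           edisj := fun e f hef => by
             simpa [MDigraph.Trail.single] using fun h => hef (hfe h.symm) }⟩

lemma nonempty_immersion_splitGraph (G : MDigraph) {e e' : G.E} (hne : e ≠ e')
    (hmid : G.head e = G.tail e') : Nonempty ((splitGraph G e e').Immersion G) := by
  let pair : G.Trail :=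
    ⟨[e, e'], List.cons_ne_nil _ _, List.isChain_pair.mpr hmid, by simp [hne]⟩
  exact ⟨{ vmap := id
           vinj := Function.injective_id
           emap := Sum.elim (fun x => .single x.1) fun _ => pair
           first_eq := by rintro (x | x) <;> rfl
           last_eq := by rintro (x | x) <;> rfl
           edisj := by
             rintro (⟨x, hxe, hxe'⟩ | ⟨⟩) (⟨y, hye, hye'⟩ | ⟨⟩) hxy
             · simpa [MDigraph.Trail.single] using fun h : y = x => hxy (by subst h; rfl)
             · simpa [MDigraph.Trail.single, pair] using ⟨hxe, hxe'⟩
             · simpa [MDigraph.Trail.single, pair] using ⟨hye, hye'⟩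
             · exact absurd rfl hxy }⟩

theorem stmt8 :
    (∀ G H : MDigraph, G.Eulerian → H.Eulerian →
        Nonempty (MDigraph.Immersion H G) → carvingWidth H ≤ carvingWidth G) ∧
      (∀ G H : MDigraph, G.Eulerian → H.Eulerian → IsSubgraph H G →
        carvingWidth H ≤ carvingWidth G) ∧
      (∀ (G : MDigraph), G.Eulerian → ∀ (e e' : G.E), e ≠ e' → G.head e = G.tail e' →
        carvingWidth (splitGraph G e e') ≤ carvingWidth G) :=
  ⟨fun _ _ _ _ ⟨I⟩ => carvingWidth_le_of_immersion I,
    fun _ _ _ _ hsub => hsub.nonempty_immersion.elim carvingWidth_le_of_immersion,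
    fun G _ _ _ hne hmid =>
      (nonempty_immersion_splitGraph G hne hmid).elim carvingWidth_le_of_immersion⟩
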